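/- For every Orlicz function Φ, the upper index admits the following characterization: q_Φ = inf{ q > 0 : there exists C > 0 such that ∫_t^∞ s^{−q} Φ(s) ds/s ≤ C t^{−q} Φ(t) for all t > 0 }, with the convention inf ∅ = ∞. -/

import Mathlib

open MeasureTheory Filter Set
open scoped ENNReal Topology

/-- An Orlicz function: continuous, nondecreasing and convex on `[0,∞)`,
vanishing at `0` and tending to `∞` at `∞`. -/
structure IsOrliczFunction (Φ : ℝ → ℝ) : Prop where
  continuousOn : ContinuousOn Φ (Set.Ici 0)
  monotoneOn : MonotoneOn Φ (Set.Ici 0)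
  convexOn : ConvexOn ℝ (Set.Ici 0) Φ
  map_zero : Φ 0 = 0
  tendsto_atTop : Tendsto Φ atTop atTop

/-- `M(t, Φ) = sup {Φ(ts)/Φ(s) : s > 0, Φ(s) > 0}`, as a value in `(0, ∞]`. -/
noncomputable def orliczM (Φ : ℝ → ℝ) (t : ℝ) : ℝ≥0∞ :=
  ⨆ s ∈ {s : ℝ | 0 < s ∧ 0 < Φ s}, ENNReal.ofReal (Φ (t * s) / Φ s)

/-- The quantity `log M(t, Φ) / log t`, as an extended real number.
The index `p_Φ` is its limit as `t → 0⁺`, and `q_Φ` is its limit as `t → ∞`. -/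
noncomputable def orliczLogRatio (Φ : ℝ → ℝ) (t : ℝ) : EReal :=
  ENNReal.log (orliczM Φ t) * ((Real.log t)⁻¹ : ℝ)

/-!
If `∫ₜ^∞ s^{-q} Φ(s) ds/s ≤ C t^{-q} Φ(t)`, then comparing the tail from `us` with the tail from
`s` (and `Φ ≥ Φ(us)` on the former) gives `Φ(us) ≤ Cq u^q Φ(s)`, i.e. `M(u,Φ) ≤ Cq u^q`, so
`q_Φ ≤ q`. Conversely, if `q_Φ < r < q` then `M(u,Φ) ≤ u^r` for `u ≥ u₀`; this forces `Φ > 0`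
on `(0,∞)` and `Φ(s) ≤ u₀^r (s/t)^r Φ(t)` for `s ≥ t`, and integrating the power `s^{r-q-1}`
gives the tail bound with `C = u₀^r / (q - r)`.
-/

def HasTailBound (Φ : ℝ → ℝ) (q : ℝ) : Prop :=
  ∃ C : ℝ, 0 < C ∧ ∀ t : ℝ, 0 < t →
    (∫⁻ s in Ioi t, ENNReal.ofReal (s ^ (-q) * Φ s / s)) ≤ ENNReal.ofReal (C * (t ^ (-q) * Φ t))

lemma lintegral_Ioi_rpow_neg_sub_one {p a : ℝ} (hp : 0 < p) (ha : 0 < a) :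
    ∫⁻ s in Ioi a, ENNReal.ofReal (s ^ (-p - 1)) = ENNReal.ofReal (a ^ (-p) / p) := by
  have hexp : -p - 1 < -1 := by linarith
  rw [← ofReal_integral_eq_lintegral_ofReal (integrableOn_Ioi_rpow_of_lt hexp ha)]
  · rw [integral_Ioi_rpow_of_lt hexp ha]
    congr 1
    ring_nf
  · filter_upwards [ae_restrict_mem measurableSet_Ioi] with s hs
    exact Real.rpow_nonneg (ha.trans hs).le _

lemma rpow_neg_mul_div_self {s : ℝ} (hs : 0 < s) (q y : ℝ) :
    s ^ (-q) * y / s = y * s ^ (-q - 1) := by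
  rw [Real.rpow_sub hs, Real.rpow_one]
  ring

lemma ofReal_div_le_orliczM {Φ : ℝ → ℝ} {t s : ℝ} (hs : 0 < s) (hΦs : 0 < Φ s) :
    ENNReal.ofReal (Φ (t * s) / Φ s) ≤ orliczM Φ t :=
  le_biSup (fun s => ENNReal.ofReal (Φ (t * s) / Φ s))
    (show s ∈ {s : ℝ | 0 < s ∧ 0 < Φ s} from ⟨hs, hΦs⟩)

lemma orliczM_le_ofReal_iff {Φ : ℝ → ℝ} {t c : ℝ} (hc : 0 ≤ c) :
    orliczM Φ t ≤ ENNReal.ofReal c ↔ ∀ s, 0 < s → 0 < Φ s → Φ (t * s) ≤ c * Φ s := by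
  refine ⟨fun h s hs hΦs => ?_, fun h => iSup₂_le fun s ⟨hs, hΦs⟩ => ?_⟩
  · rw [← div_le_iff₀ hΦs, ← ENNReal.ofReal_le_ofReal_iff hc]
    exact (ofReal_div_le_orliczM hs hΦs).trans h
  · exact ENNReal.ofReal_le_ofReal ((div_le_iff₀ hΦs).2 (h s hs hΦs))

lemma orliczLogRatio_eq_log_div_log (Φ : ℝ → ℝ) (t : ℝ) :
    orliczLogRatio Φ t = ENNReal.log (orliczM Φ t) / (Real.log t : EReal) := by
  rw [orliczLogRatio, EReal.coe_inv]
  rfl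

lemma ENNReal.log_ofReal_rpow {u : ℝ} (hu : 0 < u) (r : ℝ) :
    ENNReal.log (ENNReal.ofReal (u ^ r)) = (Real.log u : EReal) * r := by
  rw [ENNReal.log_ofReal_of_pos (Real.rpow_pos_of_pos hu r), Real.log_rpow hu, mul_comm,
    EReal.coe_mul]

lemma orliczLogRatio_le_iff {Φ : ℝ → ℝ} {u : ℝ} (hu : 1 < u) (r : ℝ) :
    orliczLogRatio Φ u ≤ r ↔ orliczM Φ u ≤ ENNReal.ofReal (u ^ r) := by
  have hlog : (0 : EReal) < Real.log u := mod_cast Real.log_pos hu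
  rw [orliczLogRatio_eq_log_div_log, EReal.div_le_iff_le_mul hlog (EReal.coe_ne_top _),
    ← ENNReal.log_ofReal_rpow (by linarith), ENNReal.log_le_log_iff]

lemma le_orliczLogRatio_iff {Φ : ℝ → ℝ} {u : ℝ} (hu : 1 < u) (r : ℝ) :
    (r : EReal) ≤ orliczLogRatio Φ u ↔ ENNReal.ofReal (u ^ r) ≤ orliczM Φ u := by
  have hlog : (0 : EReal) < Real.log u := mod_cast Real.log_pos hu
  rw [orliczLogRatio_eq_log_div_log, EReal.le_div_iff_mul_le hlog (EReal.coe_ne_top _), mul_comm,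
    ← ENNReal.log_ofReal_rpow (by linarith), ENNReal.log_le_log_iff]

lemma lintegral_Ioi_le_of_le_mul_rpow {f : ℝ → ℝ} {q r t A : ℝ} (hrq : r < q) (ht : 0 < t)
    (hA : 0 ≤ A) (hf : ∀ s, t < s → f s ≤ A * s ^ r) :
    ∫⁻ s in Ioi t, ENNReal.ofReal (s ^ (-q) * f s / s) ≤
      ENNReal.ofReal (A * (t ^ (-(q - r)) / (q - r))) := by
  calc ∫⁻ s in Ioi t, ENNReal.ofReal (s ^ (-q) * f s / s)
      ≤ ∫⁻ s in Ioi t, ENNReal.ofReal A * ENNReal.ofReal (s ^ (-(q - r) - 1)) := by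
        refine setLIntegral_mono' measurableSet_Ioi fun s hs => ?_
        have hs0 : 0 < s := ht.trans hs
        rw [← ENNReal.ofReal_mul hA, rpow_neg_mul_div_self hs0]
        refine ENNReal.ofReal_le_ofReal ?_
        calc f s * s ^ (-q - 1) ≤ A * s ^ r * s ^ (-q - 1) :=
              mul_le_mul_of_nonneg_right (hf s hs) (Real.rpow_nonneg hs0.le _)
          _ = A * s ^ (-(q - r) - 1) := by
              rw [mul_assoc, ← Real.rpow_add hs0]
              ring_nf
    _ = ENNReal.ofReal (A * (t ^ (-(q - r)) / (q - r))) := by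
        rw [lintegral_const_mul' _ _ ENNReal.ofReal_ne_top,
          lintegral_Ioi_rpow_neg_sub_one (by linarith) ht, ENNReal.ofReal_mul hA]

namespace IsOrliczFunction

variable {Φ : ℝ → ℝ}

lemma nonneg (hΦ : IsOrliczFunction Φ) {s : ℝ} (hs : 0 ≤ s) : 0 ≤ Φ s := by
  simpa [hΦ.map_zero] using hΦ.monotoneOn self_mem_Ici (mem_Ici.2 hs) hs

lemma exists_pos (hΦ : IsOrliczFunction Φ) : ∃ s, 0 < s ∧ 0 < Φ s :=
  ((eventually_gt_atTop 0).and (hΦ.tendsto_atTop.eventually_gt_atTop 0)).exists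

lemma mul_le_apply_mul (hΦ : IsOrliczFunction Φ) {u s : ℝ} (hu : 1 ≤ u) (hs : 0 ≤ s) :
    u * Φ s ≤ Φ (u * s) := by
  have hu0 : 0 < u := one_pos.trans_le hu
  -- `s` is the convex combination `u⁻¹ • (u * s) + (1 - u⁻¹) • 0`
  have h := hΦ.convexOn.2 (mem_Ici.2 (mul_nonneg hu0.le hs)) (self_mem_Ici (a := (0 : ℝ)))
    (inv_nonneg.2 hu0.le) (sub_nonneg.2 (inv_le_one_of_one_le₀ hu)) (add_sub_cancel _ _)
  simp only [smul_eq_mul, mul_zero, add_zero, hΦ.map_zero, inv_mul_cancel_left₀ hu0.ne'] at h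
  calc u * Φ s ≤ u * (u⁻¹ * Φ (u * s)) := mul_le_mul_of_nonneg_left h hu0.le
    _ = Φ (u * s) := mul_inv_cancel_left₀ hu0.ne' _

lemma ofReal_le_orliczM (hΦ : IsOrliczFunction Φ) {u : ℝ} (hu : 1 ≤ u) :
    ENNReal.ofReal u ≤ orliczM Φ u := by
  obtain ⟨s, hs, hΦs⟩ := hΦ.exists_pos
  refine le_trans (ENNReal.ofReal_le_ofReal ?_) (ofReal_div_le_orliczM hs hΦs)
  rw [le_div_iff₀ hΦs]
  exact hΦ.mul_le_apply_mul hu hs.le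

lemma pos_of_apply_mul_le (hΦ : IsOrliczFunction Φ) {u K : ℝ} (hu : 1 < u)
    (hK : ∀ s, 0 < s → 0 < Φ s → Φ (u * s) ≤ K * Φ s) {x : ℝ} (hx : 0 < x) : 0 < Φ x := by
  by_contra! hΦx
  set Z := Ici 0 ∩ Φ ⁻¹' {0}
  have hZ : IsClosed Z :=
    hΦ.continuousOn.preimage_isClosed_of_isClosed isClosed_Ici isClosed_singleton
  obtain ⟨c, hc⟩ := eventually_atTop.1 (hΦ.tendsto_atTop.eventually_gt_atTop 0)
  have hbdd : BddAbove Z := ⟨c, fun y hy => not_lt.1 fun hcy => (hc y hcy.le).ne' hy.2⟩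
  have hxZ : x ∈ Z := ⟨hx.le, le_antisymm hΦx (hΦ.nonneg hx.le)⟩
  -- `Φ` vanishes at the right end `b` of its zero set, yet `K Φ(y) ≥ Φ(ub) > 0` for all `y > b`
  set b := sSup Z
  have hbZ : b ∈ Z := hZ.csSup_mem ⟨x, hxZ⟩ hbdd
  have hb : 0 < b := hx.trans_le (le_csSup hbdd hxZ)
  have hpos : ∀ y, b < y → 0 < Φ y := fun y hy =>
    (hΦ.nonneg (hb.trans hy).le).lt_of_ne' fun h0 =>
      notMem_of_csSup_lt hy hbdd ⟨(hb.trans hy).le, h0⟩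
  have hu0 : 0 < u := one_pos.trans hu
  have hub : ∀ y, b < y → Φ (u * b) ≤ K * Φ y := fun y hy =>
    (hΦ.monotoneOn (mem_Ici.2 (by positivity)) (mem_Ici.2 (mul_pos hu0 (hb.trans hy)).le)
      (mul_le_mul_of_nonneg_left hy.le hu0.le)).trans (hK y (hb.trans hy) (hpos y hy))
  have hlim : Tendsto (fun y => K * Φ y) (𝓝[>] b) (𝓝 (K * Φ b)) :=
    ((hΦ.continuousOn b hbZ.1).mono_of_mem_nhdsWithin
      (mem_nhdsWithin.2 ⟨Ioi 0, isOpen_Ioi, hb, fun y hy => mem_Ici.2 hy.1.le⟩)).tendsto.const_mul K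
  have hle : Φ (u * b) ≤ K * Φ b :=
    ge_of_tendsto hlim (eventually_nhdsWithin_of_forall hub)
  rw [hbZ.2, mul_zero] at hle
  exact (hpos _ (lt_mul_of_one_lt_left hb hu)).not_ge hle

lemma apply_le_rpow_mul (hΦ : IsOrliczFunction Φ) {u₀ r : ℝ} (hu₀ : 1 ≤ u₀) (hr : 0 ≤ r)
    (h : ∀ u, u₀ ≤ u → ∀ s, 0 < s → 0 < Φ s → Φ (u * s) ≤ u ^ r * Φ s)
    {t s : ℝ} (ht : 0 < t) (hΦt : 0 < Φ t) (hts : t ≤ s) :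
    Φ s ≤ u₀ ^ r * (s / t) ^ r * Φ t := by
  have hst : 1 ≤ s / t := (one_le_div ht).2 hts
  have hu₀r : 1 ≤ u₀ ^ r := Real.one_le_rpow hu₀ hr
  have hstr : 1 ≤ (s / t) ^ r := Real.one_le_rpow hst hr
  rcases le_or_gt u₀ (s / t) with hbig | hsmall
  · calc Φ s = Φ (s / t * t) := by rw [div_mul_cancel₀ _ ht.ne']
      _ ≤ (s / t) ^ r * Φ t := h _ hbig t ht hΦt
      _ ≤ u₀ ^ r * (s / t) ^ r * Φ t := by
          rw [mul_assoc]
          exact le_mul_of_one_le_left (by positivity) hu₀r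
  · calc Φ s ≤ Φ (u₀ * t) :=
          hΦ.monotoneOn (mem_Ici.2 (ht.le.trans hts)) (mem_Ici.2 (by positivity))
            ((div_lt_iff₀ ht).1 hsmall).le
      _ ≤ u₀ ^ r * Φ t := h u₀ le_rfl t ht hΦt
      _ ≤ u₀ ^ r * (s / t) ^ r * Φ t := mul_le_mul_of_nonneg_right
          (le_mul_of_one_le_right (zero_le_one.trans hu₀r) hstr) hΦt.le

lemma ofReal_le_lintegral_Ioi (hΦ : IsOrliczFunction Φ) {q t : ℝ} (hq : 0 < q) (ht : 0 < t) :
    ENNReal.ofReal (Φ t * (t ^ (-q) / q)) ≤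
      ∫⁻ s in Ioi t, ENNReal.ofReal (s ^ (-q) * Φ s / s) := by
  have hΦt := hΦ.nonneg ht.le
  calc ENNReal.ofReal (Φ t * (t ^ (-q) / q))
      = ∫⁻ s in Ioi t, ENNReal.ofReal (Φ t) * ENNReal.ofReal (s ^ (-q - 1)) := by
        rw [lintegral_const_mul' _ _ ENNReal.ofReal_ne_top, lintegral_Ioi_rpow_neg_sub_one hq ht,
          ENNReal.ofReal_mul hΦt]
    _ ≤ ∫⁻ s in Ioi t, ENNReal.ofReal (s ^ (-q) * Φ s / s) := by
        refine setLIntegral_mono' measurableSet_Ioi fun s hs => ?_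
        have hs0 : 0 < s := ht.trans hs
        rw [← ENNReal.ofReal_mul hΦt, rpow_neg_mul_div_self hs0]
        exact ENNReal.ofReal_le_ofReal <| mul_le_mul_of_nonneg_right
          (hΦ.monotoneOn (mem_Ici.2 ht.le) (mem_Ici.2 hs0.le) hs.le) (Real.rpow_nonneg hs0.le _)

lemma orliczM_le_of_lintegral_le (hΦ : IsOrliczFunction Φ) {q C : ℝ} (hq : 0 < q) (hC : 0 < C)
    (hbound : ∀ t : ℝ, 0 < t → (∫⁻ s in Ioi t, ENNReal.ofReal (s ^ (-q) * Φ s / s))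
      ≤ ENNReal.ofReal (C * (t ^ (-q) * Φ t)))
    {u : ℝ} (hu : 1 ≤ u) : orliczM Φ u ≤ ENNReal.ofReal (C * q * u ^ q) := by
  have hu0 : 0 < u := one_pos.trans_le hu
  refine (orliczM_le_ofReal_iff (by positivity)).2 fun s hs hΦs => ?_
  have hus : 0 < u * s := mul_pos hu0 hs
  have htail : ENNReal.ofReal (Φ (u * s) * ((u * s) ^ (-q) / q)) ≤
      ENNReal.ofReal (C * (s ^ (-q) * Φ s)) :=
    calc _ ≤ ∫⁻ r in Ioi (u * s), ENNReal.ofReal (r ^ (-q) * Φ r / r) :=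
          hΦ.ofReal_le_lintegral_Ioi hq hus
      _ ≤ ∫⁻ r in Ioi s, ENNReal.ofReal (r ^ (-q) * Φ r / r) :=
          lintegral_mono_set (Ioi_subset_Ioi (le_mul_of_one_le_left hs.le hu))
      _ ≤ _ := hbound s hs
  rw [ENNReal.ofReal_le_ofReal_iff (by positivity), Real.mul_rpow hu0.le hs.le,
    Real.rpow_neg hu0.le, Real.rpow_neg hs.le] at htail
  have hsq : 0 < s ^ q := Real.rpow_pos_of_pos hs q
  have huq : 0 < u ^ q := Real.rpow_pos_of_pos hu0 q
  field_simp at htail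
  nlinarith

variable {qΦ : EReal}

lemma one_le_of_tendsto_orliczLogRatio (hΦ : IsOrliczFunction Φ)
    (hqΦ : Tendsto (orliczLogRatio Φ) atTop (𝓝 qΦ)) : 1 ≤ qΦ := by
  refine ge_of_tendsto hqΦ ?_
  filter_upwards [eventually_gt_atTop 1] with u hu
  rw [← EReal.coe_one, le_orliczLogRatio_iff hu, Real.rpow_one]
  exact hΦ.ofReal_le_orliczM hu.le

lemma le_of_tendsto_orliczLogRatio_of_hasTailBound (hΦ : IsOrliczFunction Φ)
    (hqΦ : Tendsto (orliczLogRatio Φ) atTop (𝓝 qΦ)) {q : ℝ} (hq : 0 < q)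
    (hbound : HasTailBound Φ q) : qΦ ≤ q := by
  obtain ⟨C, hC, hbound⟩ := hbound
  have hCq : 0 < C * q := mul_pos hC hq
  set g : ℝ → ℝ := fun u => q + Real.log (C * q) / Real.log u
  have hg : Tendsto (fun u => (g u : EReal)) atTop (𝓝 q) := by
    refine EReal.tendsto_coe.2 ?_
    simpa using tendsto_const_nhds.add (tendsto_const_nhds.div_atTop Real.tendsto_log_atTop)
  refine le_of_tendsto_of_tendsto hqΦ hg ?_
  filter_upwards [eventually_gt_atTop 1] with u hu
  have hu0 : 0 < u := one_pos.trans hu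
  have hgu : u ^ g u = C * q * u ^ q := by
    rw [Real.rpow_add hu0, Real.rpow_def_of_pos hu0 (Real.log _ / _),
      mul_div_cancel₀ _ (Real.log_pos hu).ne', Real.exp_log hCq, mul_comm]
  rw [orliczLogRatio_le_iff hu, hgu]
  exact hΦ.orliczM_le_of_lintegral_le hq hC hbound hu.le

lemma hasTailBound_of_tendsto_orliczLogRatio_of_lt (hΦ : IsOrliczFunction Φ)
    (hqΦ : Tendsto (orliczLogRatio Φ) atTop (𝓝 qΦ)) {q : ℝ} (hlt : qΦ < q) :
    HasTailBound Φ q := by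
  obtain ⟨r, hqΦr, hrq⟩ := EReal.exists_between_coe_real hlt
  have hrq : r < q := mod_cast hrq
  have hr : 0 ≤ r := by
    have : (1 : EReal) < r := (hΦ.one_le_of_tendsto_orliczLogRatio hqΦ).trans_lt hqΦr
    exact zero_le_one.trans (mod_cast this.le)
  obtain ⟨u₁, hu₁⟩ := eventually_atTop.1 (hqΦ.eventually_lt_const hqΦr)
  set u₀ := max u₁ 2
  have hu₀ : 1 < u₀ := one_lt_two.trans_le (le_max_right _ _)
  have hgrowth : ∀ u, u₀ ≤ u → ∀ s, 0 < s → 0 < Φ s → Φ (u * s) ≤ u ^ r * Φ s := fun u hu =>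
    (orliczM_le_ofReal_iff (Real.rpow_nonneg (by linarith) r)).1 <|
      (orliczLogRatio_le_iff (hu₀.trans_le hu) r).1 (hu₁ u ((le_max_left _ _).trans hu)).le
  have hpos : ∀ t, 0 < t → 0 < Φ t := fun t => hΦ.pos_of_apply_mul_le hu₀ (hgrowth u₀ le_rfl)
  refine ⟨u₀ ^ r / (q - r), div_pos (by positivity) (by linarith), fun t ht => ?_⟩
  have hΦt := hpos t ht
  calc ∫⁻ s in Ioi t, ENNReal.ofReal (s ^ (-q) * Φ s / s)
      ≤ ENNReal.ofReal (u₀ ^ r * t ^ (-r) * Φ t * (t ^ (-(q - r)) / (q - r))) := by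
        refine lintegral_Ioi_le_of_le_mul_rpow hrq ht (by positivity) fun s hs => ?_
        refine (hΦ.apply_le_rpow_mul hu₀.le hr hgrowth ht hΦt hs.le).trans_eq ?_
        rw [Real.div_rpow (ht.trans hs).le ht.le, Real.rpow_neg ht.le]
        ring
    _ = ENNReal.ofReal (u₀ ^ r / (q - r) * (t ^ (-q) * Φ t)) := by
        rw [show -q = -r + -(q - r) by ring, Real.rpow_add ht]
        ring_nf

end IsOrliczFunction

/-- characterization of the upper index `q_Φ` of an Orlicz function:
`q_Φ = inf { q > 0 : ∃ C > 0, ∫ₜ^∞ s^{-q} Φ(s) ds/s ≤ C t^{-q} Φ(t) for all t > 0 }`,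
with the convention `inf ∅ = ∞`. -/
theorem orlicz_upper_index_characterization (Φ : ℝ → ℝ) (hΦ : IsOrliczFunction Φ)
    (qΦ : EReal) (hqΦ : Tendsto (orliczLogRatio Φ) atTop (𝓝 qΦ)) :
    qΦ = sInf ((fun q : ℝ => (q : EReal)) ''
        {q : ℝ | 0 < q ∧ ∃ C : ℝ, 0 < C ∧ ∀ t : ℝ, 0 < t →
          (∫⁻ s in Set.Ioi t, ENNReal.ofReal (s ^ (-q) * Φ s / s))
            ≤ ENNReal.ofReal (C * (t ^ (-q) * Φ t))}) := by
  refine le_antisymm (le_sInf ?_) (le_of_forall_gt_imp_ge_of_dense fun c hc => ?_)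
  · rintro _ ⟨q, ⟨hq, hbound⟩, rfl⟩
    exact hΦ.le_of_tendsto_orliczLogRatio_of_hasTailBound hqΦ hq hbound
  · obtain ⟨q, hqΦq, hqc⟩ := EReal.exists_between_coe_real hc
    have hq : (0 : EReal) < q :=
      zero_lt_one.trans_le ((hΦ.one_le_of_tendsto_orliczLogRatio hqΦ).trans hqΦq.le)
    have hbound := hΦ.hasTailBound_of_tendsto_orliczLogRatio_of_lt hqΦ hqΦq
    have hmem : q ∈ {q : ℝ | 0 < q ∧ HasTailBound Φ q} := ⟨mod_cast hq, hbound⟩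
    exact (sInf_le (mem_image_of_mem (fun q : ℝ => (q : EReal)) hmem)).trans hqc.le
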